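/- arXiv:2202.11910 — 3 statements merged into one kernel-verified Lean document; each statement's English description precedes it below -/
import Mathlib

section
/- If F and G are cumulative distribution functions of real-valued random variables with distributions μ and ν having finite first moments, then the 1-Wasserstein distance satisfies W₁(μ, ν) = ∫_{-∞}^{∞} |F(r) - G(r)| dr. -/
open MeasureTheory

open MeasureTheory Set
open scoped ENNReal NNReal

lemma setNe_Ico' {x y : ℝ} (h : x ≤ y) : {r : ℝ | (x ≤ r) ≠ (y ≤ r)} = Set.Ico x y := by
  ext r
  simp only [mem_setOf_eq, ne_eq, eq_iff_iff, mem_Ico]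
  constructor
  · intro hne
    by_cases hx : x ≤ r
    · by_cases hy : y ≤ r
      · exact absurd (iff_of_true hx hy) hne
      · exact ⟨hx, not_le.mp hy⟩
    · have hy : ¬ y ≤ r := fun hy => hx (le_trans h hy)
      exact absurd (iff_of_false hx hy) hne
  · rintro ⟨hx, hy⟩ hiff
    exact absurd (hiff.mp hx) (not_le.mpr hy)

lemma setNe_Ico (x y : ℝ) : {r : ℝ | (x ≤ r) ≠ (y ≤ r)} = Set.Ico (min x y) (max x y) := by
  rcases le_total x y with h | h
  · rw [min_eq_left h, max_eq_right h, setNe_Ico' h]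
  · rw [min_eq_right h, max_eq_left h, ← setNe_Ico' h]
    ext r; simp only [mem_setOf_eq, ne_eq, eq_iff_iff]; tauto

lemma setNe_Ioc' {a b : ℝ} (h : a ≤ b) : {u : ℝ | (u ≤ a) ≠ (u ≤ b)} = Set.Ioc a b := by
  ext u
  simp only [mem_setOf_eq, ne_eq, eq_iff_iff, mem_Ioc]
  constructor
  · intro hne
    by_cases ha : u ≤ a
    · exact absurd (iff_of_true ha (le_trans ha h)) hne
    · by_cases hb : u ≤ b
      · exact ⟨not_le.mp ha, hb⟩
      · exact absurd (iff_of_false ha hb) hne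
  · rintro ⟨ha, hb⟩ hiff
    exact absurd (hiff.mpr hb) (not_le.mpr ha)

lemma setNe_Ioc (a b : ℝ) : {u : ℝ | (u ≤ a) ≠ (u ≤ b)} = Set.Ioc (min a b) (max a b) := by
  rcases le_total a b with h | h
  · rw [min_eq_left h, max_eq_right h, setNe_Ioc' h]
  · rw [min_eq_right h, max_eq_left h, ← setNe_Ioc' h]
    ext u; simp only [mem_setOf_eq, ne_eq, eq_iff_iff]; tauto

lemma core_lintegral {α : Type*} [MeasurableSpace α] (m : Measure α) [SigmaFinite m]
    {X Y : α → ℝ} (hX : Measurable X) (hY : Measurable Y) :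
    ∫⁻ a, ENNReal.ofReal |X a - Y a| ∂m = ∫⁻ r, m {a | (X a ≤ r) ≠ (Y a ≤ r)} := by
  set T : Set (α × ℝ) := {q | (X q.1 ≤ q.2) ≠ (Y q.1 ≤ q.2)} with hTdef
  have h1 : MeasurableSet {q : α × ℝ | X q.1 ≤ q.2} :=
    measurableSet_le (hX.comp measurable_fst) measurable_snd
  have h2 : MeasurableSet {q : α × ℝ | Y q.1 ≤ q.2} :=
    measurableSet_le (hY.comp measurable_fst) measurable_snd
  have hT : MeasurableSet T := by
    have : T = ({q : α × ℝ | X q.1 ≤ q.2} \ {q | Y q.1 ≤ q.2}) ∪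
        ({q : α × ℝ | Y q.1 ≤ q.2} \ {q | X q.1 ≤ q.2}) := by
      ext q; simp only [hTdef, mem_setOf_eq, ne_eq, eq_iff_iff, mem_union, mem_diff, mem_setOf_eq]
      tauto
    rw [this]; exact (h1.diff h2).union (h2.diff h1)
  calc ∫⁻ a, ENNReal.ofReal |X a - Y a| ∂m
      = ∫⁻ a, volume (Prod.mk a ⁻¹' T) ∂m := by
        refine lintegral_congr fun a => ?_
        have : Prod.mk a ⁻¹' T = Set.Ico (min (X a) (Y a)) (max (X a) (Y a)) := by
          rw [← setNe_Ico]; rfl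
        rw [this, Real.volume_Ico, max_sub_min_eq_abs, abs_sub_comm]
    _ = (m.prod volume) T := (Measure.prod_apply hT).symm
    _ = ∫⁻ r, m ((fun a => (a, r)) ⁻¹' T) := Measure.prod_apply_symm hT
    _ = ∫⁻ r, m {a | (X a ≤ r) ≠ (Y a ≤ r)} := rfl

open ProbabilityTheory Filter

/-- Quantile function (generalized inverse cdf), clamped to `0` outside `(0,1)`. -/
noncomputable def quant (μ : Measure ℝ) (u : ℝ) : ℝ :=
  if u ∈ Set.Ioo (0:ℝ) 1 then sInf {x | u ≤ cdf μ x} else 0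

lemma quant_le_iff (μ : Measure ℝ) [IsProbabilityMeasure μ] {u : ℝ}
    (hu : u ∈ Set.Ioo (0:ℝ) 1) (r : ℝ) :
    quant μ u ≤ r ↔ u ≤ cdf μ r := by
  obtain ⟨hu0, hu1⟩ := hu
  have hne : {x | u ≤ cdf μ x}.Nonempty := by
    have h : ∀ᶠ x in atTop, u < cdf μ x := (tendsto_cdf_atTop μ).eventually_const_lt hu1
    obtain ⟨x, hx⟩ := h.exists
    exact ⟨x, hx.le⟩
  have hbdd : BddBelow {x | u ≤ cdf μ x} := by
    have h : ∀ᶠ x in atBot, cdf μ x < u := (tendsto_cdf_atBot μ).eventually_lt_const hu0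
    obtain ⟨b, hb⟩ := h.exists
    refine ⟨b, fun x hx => le_of_not_gt fun hxb => ?_⟩
    exact absurd (le_trans hx (monotone_cdf μ hxb.le)) (not_le.mpr hb)
  unfold quant
  rw [if_pos (Set.mem_Ioo.mpr ⟨hu0, hu1⟩)]
  constructor
  · intro h
    have key : ∀ x, r < x → u ≤ cdf μ x := by
      intro x hx
      obtain ⟨y, hy, hyx⟩ := exists_lt_of_csInf_lt hne (lt_of_le_of_lt h hx)
      exact le_trans hy (monotone_cdf μ hyx.le)
    have hcont : Tendsto (cdf μ) (nhdsWithin r (Set.Ioi r)) (nhds (cdf μ r)) :=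
      ((cdf μ).right_continuous r).mono_left (nhdsWithin_mono r Set.Ioi_subset_Ici_self)
    exact ge_of_tendsto hcont (eventually_nhdsWithin_of_forall fun x hx => key x hx)
  · intro h
    exact csInf_le hbdd h

lemma measurable_quant (μ : Measure ℝ) [IsProbabilityMeasure μ] : Measurable (quant μ) := by
  apply measurable_of_Iic
  intro r
  have hEq : quant μ ⁻¹' (Set.Iic r) =
      (Set.Ioo (0:ℝ) 1 ∩ Set.Iic (cdf μ r)) ∪ ((Set.Ioo (0:ℝ) 1)ᶜ ∩ {u : ℝ | (0:ℝ) ≤ r}) := by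
    ext u
    by_cases hu : u ∈ Set.Ioo (0:ℝ) 1
    · simp only [Set.mem_preimage, Set.mem_Iic, Set.mem_union, Set.mem_inter_iff, hu,
        Set.mem_compl_iff, not_true_eq_false, false_and, or_false, true_and,
        quant_le_iff μ hu r]
    · have : quant μ u = 0 := if_neg hu
      simp only [Set.mem_preimage, Set.mem_Iic, this, Set.mem_union, Set.mem_inter_iff, hu,
        Set.mem_compl_iff, not_false_eq_true, true_and, false_and, false_or, Set.mem_setOf_eq]
  rw [hEq]
  refine (measurableSet_Ioo.inter measurableSet_Iic).union (measurableSet_Ioo.compl.inter ?_)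
  by_cases h : (0:ℝ) ≤ r <;> simp [h]

lemma vol_Ioo_inter_Iic {t : ℝ} (h0 : 0 ≤ t) (h1 : t ≤ 1) :
    volume (Set.Ioo (0:ℝ) 1 ∩ Set.Iic t) = ENNReal.ofReal t := by
  apply le_antisymm
  · have : Set.Ioo (0:ℝ) 1 ∩ Set.Iic t ⊆ Set.Ioc 0 t := fun u hu => ⟨hu.1.1, hu.2⟩
    calc volume (Set.Ioo (0:ℝ) 1 ∩ Set.Iic t) ≤ volume (Set.Ioc (0:ℝ) t) := measure_mono this
      _ = ENNReal.ofReal t := by rw [Real.volume_Ioc, sub_zero]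
  · have : Set.Ioo (0:ℝ) t ⊆ Set.Ioo (0:ℝ) 1 ∩ Set.Iic t :=
      fun u hu => ⟨⟨hu.1, lt_of_lt_of_le hu.2 h1⟩, hu.2.le⟩
    calc ENNReal.ofReal t = volume (Set.Ioo (0:ℝ) t) := by rw [Real.volume_Ioo, sub_zero]
      _ ≤ _ := measure_mono this

lemma vol_Ioc_inter_Ioo {m M : ℝ} (h0 : 0 ≤ m) (h1 : M ≤ 1) :
    volume (Set.Ioc m M ∩ Set.Ioo (0:ℝ) 1) = ENNReal.ofReal (M - m) := by
  apply le_antisymm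
  · calc volume (Set.Ioc m M ∩ Set.Ioo (0:ℝ) 1) ≤ volume (Set.Ioc m M) :=
        measure_mono Set.inter_subset_left
      _ = ENNReal.ofReal (M - m) := Real.volume_Ioc
  · have : Set.Ioo m M ⊆ Set.Ioc m M ∩ Set.Ioo (0:ℝ) 1 :=
      fun u hu => ⟨⟨hu.1, hu.2.le⟩, lt_of_le_of_lt h0 hu.1, lt_of_lt_of_le hu.2 h1⟩
    calc ENNReal.ofReal (M - m) = volume (Set.Ioo m M) := Real.volume_Ioo.symm
      _ ≤ _ := measure_mono this

lemma map_quant (μ : Measure ℝ) [IsProbabilityMeasure μ] :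
    (volume.restrict (Set.Ioo (0:ℝ) 1)).map (quant μ) = μ := by
  have hq := measurable_quant μ
  have hfin : IsFiniteMeasure ((volume.restrict (Set.Ioo (0:ℝ) 1)).map (quant μ)) := by
    constructor
    rw [Measure.map_apply hq MeasurableSet.univ]
    exact lt_of_le_of_lt (le_trans (measure_mono (Set.subset_univ _)) (le_of_eq (by
      rw [Measure.restrict_apply_univ, Real.volume_Ioo, sub_zero, ENNReal.ofReal_one])))
      ENNReal.one_lt_top
  refine Measure.ext_of_Iic _ μ fun r => ?_
  rw [Measure.map_apply hq measurableSet_Iic, Measure.restrict_apply (hq measurableSet_Iic)]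
  have hset : quant μ ⁻¹' Set.Iic r ∩ Set.Ioo 0 1 = Set.Ioo (0:ℝ) 1 ∩ Set.Iic (cdf μ r) := by
    ext u
    constructor
    · rintro ⟨h1, h2⟩; exact ⟨h2, (quant_le_iff μ h2 r).mp h1⟩
    · rintro ⟨h1, h2⟩; exact ⟨(quant_le_iff μ h1 r).mpr h2, h1⟩
  rw [hset, vol_Ioo_inter_Iic (cdf_nonneg μ r) (cdf_le_one μ r), ofReal_cdf]


/-- 1-Wasserstein (Kantorovich) distance between probability measures on ℝ,
defined as the infimum of `∫ |x - y| dπ` over couplings `π` of `(μ, ν)`. -/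
noncomputable def W1 (μ ν : Measure ℝ) : ℝ :=
  sInf {c | ∃ π : Measure (ℝ × ℝ), IsProbabilityMeasure π ∧
    π.map Prod.fst = μ ∧ π.map Prod.snd = ν ∧ c = ∫ p, |p.1 - p.2| ∂π}

/-- for probability measures with finite first moments,
`W₁(μ, ν) = ∫ |F(r) - G(r)| dr` where `F, G` are the cdfs. -/
theorem stmt_0 (μ ν : Measure ℝ) [IsProbabilityMeasure μ] [IsProbabilityMeasure ν]
    (hμ : Integrable id μ) (hν : Integrable id ν) :
    W1 μ ν = ∫ r : ℝ, |(μ (Set.Iic r)).toReal - (ν (Set.Iic r)).toReal| := by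
  classical
  set L : ENNReal := ∫⁻ r, ENNReal.ofReal |cdf μ r - cdf ν r| with hL
  have hmF : Measurable (cdf μ) := (monotone_cdf μ).measurable
  have hmG : Measurable (cdf ν) := (monotone_cdf ν).measurable
  -- key facts for an arbitrary coupling
  have key : ∀ π : Measure (ℝ × ℝ), IsProbabilityMeasure π → π.map Prod.fst = μ →
      π.map Prod.snd = ν →
      L ≤ ∫⁻ p, ENNReal.ofReal |p.1 - p.2| ∂π ∧
      (∫⁻ p, ENNReal.ofReal |p.1 - p.2| ∂π) < ⊤ ∧
      (∫ p, |p.1 - p.2| ∂π) = (∫⁻ p, ENNReal.ofReal |p.1 - p.2| ∂π).toReal := by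
    intro π hπ h1 h2
    haveI := hπ
    have hfin : (∫⁻ p, ENNReal.ofReal |p.1 - p.2| ∂π) < ⊤ := by
      have hb : ∀ p : ℝ × ℝ,
          ENNReal.ofReal |p.1 - p.2| ≤ ENNReal.ofReal |p.1| + ENNReal.ofReal |p.2| := by
        intro p
        rw [← ENNReal.ofReal_add (abs_nonneg _) (abs_nonneg _)]
        refine ENNReal.ofReal_le_ofReal ?_
        calc |p.1 - p.2| = |p.1 + -p.2| := by rw [sub_eq_add_neg]
          _ ≤ |p.1| + |-p.2| := abs_add_le _ _
          _ = |p.1| + |p.2| := by rw [abs_neg]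
      have hmo : ∀ x : ℝ, ENNReal.ofReal |x| = (‖x‖₊ : ℝ≥0∞) := fun x => by
        rw [← Real.norm_eq_abs]; exact (ofReal_norm x).trans rfl
      have e1 : ∫⁻ p : ℝ × ℝ, ENNReal.ofReal |p.1| ∂π = ∫⁻ x, ENNReal.ofReal |x| ∂μ := by
        rw [← h1, lintegral_map (measurable_abs.ennreal_ofReal) measurable_fst]
      have e2 : ∫⁻ p : ℝ × ℝ, ENNReal.ofReal |p.2| ∂π = ∫⁻ x, ENNReal.ofReal |x| ∂ν := by
        rw [← h2, lintegral_map (measurable_abs.ennreal_ofReal) measurable_snd]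
      have f1 : ∫⁻ x, ENNReal.ofReal |x| ∂μ < ⊤ := by
        simp_rw [hmo]; exact hμ.hasFiniteIntegral
      have f2 : ∫⁻ x, ENNReal.ofReal |x| ∂ν < ⊤ := by
        simp_rw [hmo]; exact hν.hasFiniteIntegral
      calc ∫⁻ p, ENNReal.ofReal |p.1 - p.2| ∂π
          ≤ ∫⁻ p : ℝ × ℝ, (ENNReal.ofReal |p.1| + ENNReal.ofReal |p.2|) ∂π := lintegral_mono hb
        _ = (∫⁻ p : ℝ × ℝ, ENNReal.ofReal |p.1| ∂π) + ∫⁻ p : ℝ × ℝ, ENNReal.ofReal |p.2| ∂π :=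
            lintegral_add_left (measurable_fst.abs.ennreal_ofReal) _
        _ < ⊤ := by rw [e1, e2]; exact ENNReal.add_lt_top.mpr ⟨f1, f2⟩
    have hle : L ≤ ∫⁻ p, ENNReal.ofReal |p.1 - p.2| ∂π := by
      have hcore := core_lintegral π (X := Prod.fst) (Y := Prod.snd)
        measurable_fst measurable_snd
      rw [hL, hcore]
      refine lintegral_mono fun r => ?_
      set S1 : Set (ℝ × ℝ) := Prod.fst ⁻¹' Set.Iic r with hS1def
      set S2 : Set (ℝ × ℝ) := Prod.snd ⁻¹' Set.Iic r with hS2def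
      have mS1 : MeasurableSet S1 := measurable_fst measurableSet_Iic
      have mS2 : MeasurableSet S2 := measurable_snd measurableSet_Iic
      have hA : π S1 = π (S1 ∩ S2ᶜ) + π (S1 ∩ S2) := by
        rw [← measure_union (Disjoint.mono Set.inter_subset_right Set.inter_subset_right
          disjoint_compl_left) (mS1.inter mS2)]
        rw [← Set.inter_union_distrib_left, Set.compl_union_self, Set.inter_univ]
      have hB : π S2 = π (S2 ∩ S1ᶜ) + π (S1 ∩ S2) := by
        rw [Set.inter_comm S1 S2]
        rw [← measure_union (Disjoint.mono Set.inter_subset_right Set.inter_subset_right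
          disjoint_compl_left) (mS2.inter mS1)]
        rw [← Set.inter_union_distrib_left, Set.compl_union_self, Set.inter_univ]
      have hFr : cdf μ r = ((π (S1 ∩ S2ᶜ)) + π (S1 ∩ S2)).toReal := by
        rw [cdf_eq_real, measureReal_def, ← h1, Measure.map_apply measurable_fst measurableSet_Iic, ← hA]
      have hGr : cdf ν r = ((π (S2 ∩ S1ᶜ)) + π (S1 ∩ S2)).toReal := by
        rw [cdf_eq_real, measureReal_def, ← h2, Measure.map_apply measurable_snd measurableSet_Iic, ← hB]
      have hset : {p : ℝ × ℝ | (p.1 ≤ r) ≠ (p.2 ≤ r)} = (S1 ∩ S2ᶜ) ∪ (S2 ∩ S1ᶜ) := by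
        ext p
        simp only [Set.mem_setOf_eq, ne_eq, eq_iff_iff, Set.mem_union, Set.mem_inter_iff,
          Set.mem_compl_iff, hS1def, hS2def, Set.mem_preimage, Set.mem_Iic]
        tauto
      have hdisj : Disjoint (S1 ∩ S2ᶜ) (S2 ∩ S1ᶜ) :=
        Disjoint.mono Set.inter_subset_left Set.inter_subset_right disjoint_compl_right
      have hπS : π {p : ℝ × ℝ | (p.1 ≤ r) ≠ (p.2 ≤ r)} = π (S1 ∩ S2ᶜ) + π (S2 ∩ S1ᶜ) := by
        rw [hset, measure_union hdisj (mS2.inter mS1.compl)]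
      rw [hπS]
      set a := π (S1 ∩ S2ᶜ); set b := π (S2 ∩ S1ᶜ); set c := π (S1 ∩ S2)
      have ha : a ≠ ⊤ := measure_ne_top π _
      have hb' : b ≠ ⊤ := measure_ne_top π _
      have hc : c ≠ ⊤ := measure_ne_top π _
      have habs : |cdf μ r - cdf ν r| ≤ a.toReal + b.toReal := by
        rw [hFr, hGr, ENNReal.toReal_add ha hc, ENNReal.toReal_add hb' hc]
        rw [show a.toReal + c.toReal - (b.toReal + c.toReal) = a.toReal - b.toReal by ring]
        calc |a.toReal - b.toReal| ≤ |a.toReal| + |b.toReal| := by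
              rw [sub_eq_add_neg]; exact (abs_add_le _ _).trans (by rw [abs_neg])
          _ = a.toReal + b.toReal := by
              rw [abs_of_nonneg ENNReal.toReal_nonneg, abs_of_nonneg ENNReal.toReal_nonneg]
      calc ENNReal.ofReal |cdf μ r - cdf ν r| ≤ ENNReal.ofReal (a.toReal + b.toReal) :=
            ENNReal.ofReal_le_ofReal habs
        _ = ENNReal.ofReal a.toReal + ENNReal.ofReal b.toReal :=
            ENNReal.ofReal_add ENNReal.toReal_nonneg ENNReal.toReal_nonneg
        _ = a + b := by rw [ENNReal.ofReal_toReal ha, ENNReal.ofReal_toReal hb']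
    have heq : ∫ p, |p.1 - p.2| ∂π = (∫⁻ p, ENNReal.ofReal |p.1 - p.2| ∂π).toReal :=
      integral_eq_lintegral_of_nonneg_ae (Filter.Eventually.of_forall fun p => abs_nonneg _)
        ((measurable_fst.sub measurable_snd).abs.aestronglyMeasurable)
    exact ⟨hle, hfin, heq⟩
  -- quantile coupling
  set U := volume.restrict (Set.Ioo (0:ℝ) 1) with hU
  haveI hUprob : IsProbabilityMeasure U := by
    constructor
    rw [hU, Measure.restrict_apply_univ, Real.volume_Ioo, sub_zero, ENNReal.ofReal_one]
  have hqμ := measurable_quant μ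
  have hqν := measurable_quant ν
  have hpair : Measurable fun u => (quant μ u, quant ν u) := hqμ.prodMk hqν
  set π₀ := U.map (fun u => (quant μ u, quant ν u)) with hπ₀
  haveI hprob₀ : IsProbabilityMeasure π₀ := Measure.isProbabilityMeasure_map hpair.aemeasurable
  have hm1 : π₀.map Prod.fst = μ := by
    rw [hπ₀, Measure.map_map measurable_fst hpair]
    exact map_quant μ
  have hm2 : π₀.map Prod.snd = ν := by
    rw [hπ₀, Measure.map_map measurable_snd hpair]
    exact map_quant ν
  have hval : (∫⁻ p, ENNReal.ofReal |p.1 - p.2| ∂π₀) = L := by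
    rw [hπ₀, lintegral_map (f := fun p : ℝ × ℝ => ENNReal.ofReal |p.1 - p.2|) ((measurable_fst.sub measurable_snd).abs.ennreal_ofReal) hpair]
    have : (∫⁻ u, ENNReal.ofReal |quant μ u - quant ν u| ∂U) =
        ∫⁻ r, U {u | (quant μ u ≤ r) ≠ (quant ν u ≤ r)} := core_lintegral U hqμ hqν
    rw [this, hL]
    refine lintegral_congr fun r => ?_
    have hms : MeasurableSet {u : ℝ | (quant μ u ≤ r) ≠ (quant ν u ≤ r)} := by
      have : {u : ℝ | (quant μ u ≤ r) ≠ (quant ν u ≤ r)} =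
          ((quant μ ⁻¹' Set.Iic r) \ (quant ν ⁻¹' Set.Iic r)) ∪
          ((quant ν ⁻¹' Set.Iic r) \ (quant μ ⁻¹' Set.Iic r)) := by
        ext u
        simp only [Set.mem_setOf_eq, ne_eq, eq_iff_iff, Set.mem_union, Set.mem_diff,
          Set.mem_preimage, Set.mem_Iic]
        tauto
      rw [this]
      exact ((hqμ measurableSet_Iic).diff (hqν measurableSet_Iic)).union
        ((hqν measurableSet_Iic).diff (hqμ measurableSet_Iic))
    rw [hU, Measure.restrict_apply hms]
    have hsetu : {u : ℝ | (quant μ u ≤ r) ≠ (quant ν u ≤ r)} ∩ Set.Ioo 0 1 =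
        Set.Ioc (min (cdf μ r) (cdf ν r)) (max (cdf μ r) (cdf ν r)) ∩ Set.Ioo (0:ℝ) 1 := by
      rw [← setNe_Ioc]
      ext u
      constructor
      · rintro ⟨h1, h2⟩
        refine ⟨?_, h2⟩
        have e1 : (quant μ u ≤ r) = (u ≤ cdf μ r) := propext (quant_le_iff μ h2 r)
        have e2 : (quant ν u ≤ r) = (u ≤ cdf ν r) := propext (quant_le_iff ν h2 r)
        simp only [Set.mem_setOf_eq] at h1 ⊢
        rw [e1, e2] at h1
        exact h1
      · rintro ⟨h1, h2⟩
        refine ⟨?_, h2⟩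
        have e1 : (quant μ u ≤ r) = (u ≤ cdf μ r) := propext (quant_le_iff μ h2 r)
        have e2 : (quant ν u ≤ r) = (u ≤ cdf ν r) := propext (quant_le_iff ν h2 r)
        simp only [Set.mem_setOf_eq] at h1 ⊢
        rw [e1, e2]
        exact h1
    rw [hsetu, vol_Ioc_inter_Ioo (le_min (cdf_nonneg μ r) (cdf_nonneg ν r))
      (max_le (cdf_le_one μ r) (cdf_le_one ν r)), max_sub_min_eq_abs, abs_sub_comm]
  obtain ⟨-, hfin₀, heq₀⟩ := key π₀ hprob₀ hm1 hm2
  have hLfin : L ≠ ⊤ := by rw [← hval]; exact hfin₀.ne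
  have hint₀ : ∫ p, |p.1 - p.2| ∂π₀ = L.toReal := by rw [heq₀, hval]
  have hRHS : (∫ r : ℝ, |(μ (Set.Iic r)).toReal - (ν (Set.Iic r)).toReal|) = L.toReal := by
    have hcongr : (fun r : ℝ => |(μ (Set.Iic r)).toReal - (ν (Set.Iic r)).toReal|) =
        fun r : ℝ => |cdf μ r - cdf ν r| := by
      funext r; rw [cdf_eq_real, cdf_eq_real, measureReal_def, measureReal_def]
    rw [hcongr, integral_eq_lintegral_of_nonneg_ae (f := fun r => |cdf μ r - cdf ν r|)
      (Filter.Eventually.of_forall fun r => abs_nonneg _)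
      ((hmF.sub hmG).abs.aestronglyMeasurable), hL]
  have hmem : L.toReal ∈ {c | ∃ π : Measure (ℝ × ℝ), IsProbabilityMeasure π ∧
      π.map Prod.fst = μ ∧ π.map Prod.snd = ν ∧ c = ∫ p, |p.1 - p.2| ∂π} :=
    ⟨π₀, hprob₀, hm1, hm2, hint₀.symm⟩
  have hlb : ∀ c ∈ {c | ∃ π : Measure (ℝ × ℝ), IsProbabilityMeasure π ∧
      π.map Prod.fst = μ ∧ π.map Prod.snd = ν ∧ c = ∫ p, |p.1 - p.2| ∂π}, L.toReal ≤ c := by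
    rintro c ⟨π, hπ, h1, h2, rfl⟩
    obtain ⟨hle, hfin, heq⟩ := key π hπ h1 h2
    rw [heq]
    exact (ENNReal.toReal_le_toReal hLfin hfin.ne).mpr hle
  rw [W1, hRHS]
  exact le_antisymm (csInf_le ⟨L.toReal, fun c hc => hlb c hc⟩ hmem)
    (le_csInf ⟨L.toReal, hmem⟩ hlb)
end

section
/- If F and G are cumulative distribution functions of real-valued random variables with distributions μ and ν having finite first moments, then W₁(μ, ν) = ∫_0^1 |F⁻¹(u) - G⁻¹(u)| du, where F⁻¹ and G⁻¹ denote the (generalized) quantile functions. -/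
/-!
Push Lebesgue measure on `(0, 1)` forward by `u ↦ (F⁻¹ u, G⁻¹ u)`. Since `F⁻¹ u ≤ r ↔ u ≤ F r`
for `u ∈ (0, 1)`, this comonotone coupling has marginals `μ` and `ν`, and its cost is
`∫₀¹ |F⁻¹ - G⁻¹|`. Conversely, the layer-cake identity `|x - y| = λ (Ici x ∆ Ici y)` and Tonelli
write the cost of any coupling `π` of `μ` and `ν` as
`∫ π ({p | p.1 ≤ t} ∆ {p | p.2 ≤ t}) dt ≥ ∫ |F t - G t| dt`, and the same identity applied on
`(0, 1)` turns `∫ |F - G|` back into `∫₀¹ |F⁻¹ - G⁻¹|`.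
-/

open MeasureTheory

/-- Generalized quantile function (generalized inverse of the cdf `r ↦ μ(-∞, r]`):
`F⁻¹(u) = inf {r : F(r) ≥ u}`. -/
noncomputable def quantile (μ : Measure ℝ) (u : ℝ) : ℝ :=
  sInf {r : ℝ | u ≤ (μ (Set.Iic r)).toReal}

open ProbabilityTheory Set Filter Topology
open scoped symmDiff

lemma Real.volume_Ici_symmDiff_Ici (a b : ℝ) :
    volume (Ici a ∆ Ici b) = ENNReal.ofReal |a - b| := by
  wlog hab : a ≤ b generalizing a b
  · rw [symmDiff_comm, abs_sub_comm]
    exact this b a (le_of_not_ge hab)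
  rw [symmDiff_of_ge (Ici_subset_Ici.2 hab), Ici_sdiff_Ici, Real.volume_Ico, abs_sub_comm,
    abs_of_nonneg (sub_nonneg.2 hab)]

instance : IsProbabilityMeasure (volume.restrict (Ioo (0 : ℝ) 1)) := ⟨by simp⟩

lemma volume_restrict_Ioo_zero_one_Ioc {a b : ℝ} (ha : 0 ≤ a) (hb : b ≤ 1) :
    volume.restrict (Ioo 0 1) (Ioc a b) = ENNReal.ofReal (b - a) := by
  rw [Measure.restrict_congr_set Ioo_ae_eq_Ioc, Measure.restrict_apply measurableSet_Ioc,
    inter_eq_left.2 (Ioc_subset_Ioc ha hb), Real.volume_Ioc]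

lemma volume_restrict_Ioo_zero_one_Iic {c : ℝ} (hc : c ≤ 1) :
    volume.restrict (Ioo 0 1) (Iic c) = ENNReal.ofReal c := by
  rw [Measure.restrict_congr_set Ioo_ae_eq_Ioc, Measure.restrict_apply measurableSet_Iic,
    Iic_inter_Ioc_of_le hc, Real.volume_Ioc, sub_zero]

lemma volume_restrict_Ioo_zero_one_Iic_symmDiff_Iic {a b : ℝ} (ha : a ∈ Icc 0 1)
    (hb : b ∈ Icc 0 1) :
    volume.restrict (Ioo 0 1) (Iic a ∆ Iic b) = ENNReal.ofReal |a - b| := by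
  wlog hab : a ≤ b generalizing a b
  · rw [symmDiff_comm, abs_sub_comm]
    exact this hb ha (le_of_not_ge hab)
  rw [symmDiff_of_le (Iic_subset_Iic.2 hab), Iic_sdiff_Iic,
    volume_restrict_Ioo_zero_one_Ioc ha.1 hb.2, abs_sub_comm, abs_of_nonneg (sub_nonneg.2 hab)]

lemma lintegral_abs_sub_eq_lintegral_measure_symmDiff_of_measurable {α : Type*}
    [MeasurableSpace α] (π : Measure α) [SFinite π] {f g : α → ℝ} (hf : Measurable f)
    (hg : Measurable g) :
    ∫⁻ a, ENNReal.ofReal |f a - g a| ∂π = ∫⁻ t, π ({a | f a ≤ t} ∆ {a | g a ≤ t}) := by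
  have hS : MeasurableSet ({q : α × ℝ | f q.1 ≤ q.2} ∆ {q | g q.1 ≤ q.2}) :=
    (measurableSet_le (hf.comp measurable_fst) measurable_snd).symmDiff
      (measurableSet_le (hg.comp measurable_fst) measurable_snd)
  have := (Measure.prod_apply hS).symm.trans (Measure.prod_apply_symm (μ := π) (ν := volume) hS)
  simp_rw [← Real.volume_Ici_symmDiff_Ici]
  exact this

lemma lintegral_abs_sub_eq_lintegral_measure_symmDiff {α : Type*} [MeasurableSpace α]
    (π : Measure α) [SFinite π] {f g : α → ℝ} (hf : AEMeasurable f π) (hg : AEMeasurable g π) :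
    ∫⁻ a, ENNReal.ofReal |f a - g a| ∂π = ∫⁻ t, π ({a | f a ≤ t} ∆ {a | g a ≤ t}) := by
  have hfg : ∀ᵐ a ∂π, f a = hf.mk f a ∧ g a = hg.mk g a := hf.ae_eq_mk.and hg.ae_eq_mk
  rw [lintegral_congr_ae (hfg.mono fun a ha => by rw [ha.1, ha.2]),
    lintegral_abs_sub_eq_lintegral_measure_symmDiff_of_measurable π hf.measurable_mk
      hg.measurable_mk]
  exact lintegral_congr fun t => measure_congr
    ((hf.ae_eq_mk.preimage (Iic t)).symmDiff (hg.ae_eq_mk.preimage (Iic t))).symm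

section Quantile

variable (μ : Measure ℝ) [IsProbabilityMeasure μ] {u r : ℝ}

lemma quantile_eq_sInf_cdf : quantile μ u = sInf {r | u ≤ cdf μ r} := by
  simp only [quantile, cdf_eq_real, measureReal_def]

lemma isLeast_quantile (hu : u ∈ Ioo 0 1) : IsLeast {r | u ≤ cdf μ r} (quantile μ u) := by
  obtain ⟨a, ha⟩ := ((tendsto_cdf_atBot μ).eventually (eventually_lt_nhds hu.1)).exists
  obtain ⟨b, hb⟩ := ((tendsto_cdf_atTop μ).eventually (eventually_gt_nhds hu.2)).exists
  have hbdd : BddBelow {r | u ≤ cdf μ r} :=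
    ⟨a, fun r hr => le_of_not_gt fun hra => ha.not_ge (hr.trans (monotone_cdf μ hra.le))⟩
  have hne : {r | u ≤ cdf μ r}.Nonempty := ⟨b, hb.le⟩
  rw [quantile_eq_sInf_cdf]
  refine ⟨?_, fun r hr => csInf_le hbdd hr⟩
  -- `cdf μ` is right-continuous and `≥ u` at every point to the right of the infimum.
  refine ge_of_tendsto ((cdf μ).right_continuous _ |>.mono_left
    (nhdsWithin_mono _ Ioi_subset_Ici_self)) (eventually_nhdsWithin_of_forall fun r hr => ?_)
  obtain ⟨s, hs, hsr⟩ := (csInf_lt_iff hbdd hne).mp hr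
  exact hs.trans (monotone_cdf μ hsr.le)

lemma quantile_le_iff (hu : u ∈ Ioo 0 1) : quantile μ u ≤ r ↔ u ≤ cdf μ r :=
  ⟨fun h => (isLeast_quantile μ hu).1.trans (monotone_cdf μ h),
    fun h => (isLeast_quantile μ hu).2 h⟩

lemma monotoneOn_quantile : MonotoneOn (quantile μ) (Ioo 0 1) := fun _ hu _ hv huv =>
  (quantile_le_iff μ hu).2 (huv.trans ((quantile_le_iff μ hv).1 le_rfl))

@[fun_prop]
lemma aemeasurable_quantile : AEMeasurable (quantile μ) (volume.restrict (Ioo 0 1)) :=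
  aemeasurable_restrict_of_monotoneOn measurableSet_Ioo (monotoneOn_quantile μ)

end Quantile

section Coupling

variable {μ ν : Measure ℝ} [IsProbabilityMeasure μ] [IsProbabilityMeasure ν]

lemma quantile_preimage_Iic_ae_eq (r : ℝ) :
    quantile μ ⁻¹' Iic r =ᵐ[volume.restrict (Ioo 0 1)] Iic (cdf μ r) := by
  filter_upwards [ae_restrict_mem measurableSet_Ioo] with u hu
  exact propext (quantile_le_iff μ hu)

lemma map_quantile : (volume.restrict (Ioo 0 1)).map (quantile μ) = μ := by
  refine Measure.ext_of_Iic _ _ fun r => ?_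
  rw [Measure.map_apply_of_aemeasurable (aemeasurable_quantile μ) measurableSet_Iic,
    measure_congr (quantile_preimage_Iic_ae_eq r),
    volume_restrict_Ioo_zero_one_Iic (cdf_le_one μ r), cdf_eq_real, ofReal_measureReal]

variable (μ ν) in
noncomputable def quantileCoupling : Measure (ℝ × ℝ) :=
  (volume.restrict (Ioo 0 1)).map fun u => (quantile μ u, quantile ν u)

lemma aemeasurable_quantile_prodMk :
    AEMeasurable (fun u => (quantile μ u, quantile ν u)) (volume.restrict (Ioo 0 1)) :=
  (aemeasurable_quantile μ).prodMk (aemeasurable_quantile ν)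

instance : IsProbabilityMeasure (quantileCoupling μ ν) :=
  Measure.isProbabilityMeasure_map aemeasurable_quantile_prodMk

lemma map_fst_quantileCoupling : (quantileCoupling μ ν).map Prod.fst = μ := by
  rw [quantileCoupling, AEMeasurable.map_map_of_aemeasurable measurable_fst.aemeasurable
    aemeasurable_quantile_prodMk]
  exact map_quantile

lemma map_snd_quantileCoupling : (quantileCoupling μ ν).map Prod.snd = ν := by
  rw [quantileCoupling, AEMeasurable.map_map_of_aemeasurable measurable_snd.aemeasurable
    aemeasurable_quantile_prodMk]
  exact map_quantile

lemma integral_abs_sub_quantileCoupling :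
    ∫ p, |p.1 - p.2| ∂quantileCoupling μ ν
      = ∫ u in Ioo 0 1, |quantile μ u - quantile ν u| :=
  integral_map aemeasurable_quantile_prodMk (by fun_prop)

lemma lintegral_abs_sub_quantile :
    ∫⁻ u in Ioo 0 1, ENNReal.ofReal |quantile μ u - quantile ν u|
      = ∫⁻ t, ENNReal.ofReal |cdf μ t - cdf ν t| := by
  rw [lintegral_abs_sub_eq_lintegral_measure_symmDiff _ (aemeasurable_quantile μ)
    (aemeasurable_quantile ν)]
  refine lintegral_congr fun t => (measure_congr
    ((quantile_preimage_Iic_ae_eq t).symmDiff (quantile_preimage_Iic_ae_eq t))).trans ?_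
  exact volume_restrict_Ioo_zero_one_Iic_symmDiff_Iic ⟨cdf_nonneg μ t, cdf_le_one μ t⟩
    ⟨cdf_nonneg ν t, cdf_le_one ν t⟩

lemma ofReal_abs_sub_cdf_le_measure_symmDiff {π : Measure (ℝ × ℝ)} [IsFiniteMeasure π]
    (h₁ : π.map Prod.fst = μ) (h₂ : π.map Prod.snd = ν) (t : ℝ) :
    ENNReal.ofReal |cdf μ t - cdf ν t| ≤ π ({p | p.1 ≤ t} ∆ {p | p.2 ≤ t}) := by
  rw [cdf_eq_real, cdf_eq_real, ← h₁, ← h₂,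
    map_measureReal_apply measurable_fst measurableSet_Iic,
    map_measureReal_apply measurable_snd measurableSet_Iic, ← ofReal_measureReal]
  exact ENNReal.ofReal_le_ofReal (abs_measureReal_sub_le_measureReal_symmDiff
    (measurable_fst measurableSet_Iic).nullMeasurableSet
    (measurable_snd measurableSet_Iic).nullMeasurableSet)

lemma lintegral_abs_sub_quantile_le_of_map {π : Measure (ℝ × ℝ)} [IsFiniteMeasure π]
    (h₁ : π.map Prod.fst = μ) (h₂ : π.map Prod.snd = ν) :
    ∫⁻ u in Ioo 0 1, ENNReal.ofReal |quantile μ u - quantile ν u|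
      ≤ ∫⁻ p, ENNReal.ofReal |p.1 - p.2| ∂π := by
  rw [lintegral_abs_sub_quantile,
    lintegral_abs_sub_eq_lintegral_measure_symmDiff_of_measurable π measurable_fst measurable_snd]
  exact lintegral_mono (ofReal_abs_sub_cdf_le_measure_symmDiff h₁ h₂)

lemma integral_abs_sub_quantile_le_of_map (hμ : Integrable id μ) (hν : Integrable id ν)
    {π : Measure (ℝ × ℝ)} [IsFiniteMeasure π]
    (h₁ : π.map Prod.fst = μ) (h₂ : π.map Prod.snd = ν) :
    ∫ u in Ioo 0 1, |quantile μ u - quantile ν u| ≤ ∫ p, |p.1 - p.2| ∂π := by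
  have hfst : Integrable Prod.fst π := (h₁ ▸ hμ).comp_measurable measurable_fst
  have hsnd : Integrable Prod.snd π := (h₂ ▸ hν).comp_measurable measurable_snd
  have hcost : Integrable (fun p : ℝ × ℝ => |p.1 - p.2|) π := (hfst.sub hsnd).abs
  rw [integral_eq_lintegral_of_nonneg_ae (ae_of_all _ fun _ => abs_nonneg _) (by fun_prop),
    integral_eq_lintegral_of_nonneg_ae (ae_of_all _ fun _ => abs_nonneg _)
      hcost.aestronglyMeasurable]
  exact ENNReal.toReal_mono hcost.lintegral_lt_top.ne
    (lintegral_abs_sub_quantile_le_of_map h₁ h₂)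

end Coupling

/-- `W₁(μ, ν) = ∫_0^1 |F⁻¹(u) - G⁻¹(u)| du`. -/
theorem stmt_1 (μ ν : Measure ℝ) [IsProbabilityMeasure μ] [IsProbabilityMeasure ν]
    (hμ : Integrable id μ) (hν : Integrable id ν) :
    W1 μ ν = ∫ u in Set.Ioo (0:ℝ) 1, |quantile μ u - quantile ν u| := by
  refine IsLeast.csInf_eq ⟨⟨quantileCoupling μ ν, inferInstance, map_fst_quantileCoupling,
    map_snd_quantileCoupling, integral_abs_sub_quantileCoupling.symm⟩, ?_⟩
  rintro c ⟨π, _, h₁, h₂, rfl⟩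
  exact integral_abs_sub_quantile_le_of_map hμ hν h₁ h₂
end

section
/- Let h : ℝ^d → [0,1] be measurable and ĥ(x) = E_{Z ∼ N(0, I_d)}[h(x + Z)]. Then the map x ↦ Φ⁻¹(ĥ(x)) is 1-Lipschitz continuous with respect to the Euclidean norm (on the set where ĥ takes values in (0,1)). -/
open MeasureTheory

/-- Standard normal pdf `φ`. -/
noncomputable def stdnpdf (t : ℝ) : ℝ := (Real.sqrt (2 * Real.pi))⁻¹ * Real.exp (-t ^ 2 / 2)

/-- Standard normal cdf `Φ`. -/
noncomputable def stdncdf (t : ℝ) : ℝ := ∫ s in Set.Iic t, stdnpdf s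

/-- Inverse of the standard normal cdf, `Φ⁻¹ : (0,1) → ℝ`. -/
noncomputable def stdninv : ℝ → ℝ := Function.invFun stdncdf

/-- Density of the standard Gaussian `N(0, I_d)` on `ℝ^d`. -/
noncomputable def gpdf (d : ℕ) (z : EuclideanSpace ℝ (Fin d)) : ℝ :=
  (2 * Real.pi) ^ (-(d : ℝ) / 2) * Real.exp (-‖z‖ ^ 2 / 2)

/-- Gaussian smoothing `ĥ(x) = E_{Z ∼ N(0, I_d)}[h(x + Z)]`. -/
noncomputable def gsmooth (d : ℕ) (h : EuclideanSpace ℝ (Fin d) → ℝ)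
    (x : EuclideanSpace ℝ (Fin d)) : ℝ :=
  ∫ z, h (x + z) * gpdf d z

/-! Fix `x ≠ y`, put `δ = ‖y - x‖`, `u = (y - x) / δ` and `a = Φ⁻¹(ĥ(x))`. The half-space
`A = {z | ⟪u, z - x⟫ ≤ a}` has `N(x, I)`-mass `Φ(a) = ĥ(x)` and `N(y, I)`-mass `Φ(a - δ)`.
The likelihood ratio of `N(y, I)` against `N(x, I)` is increasing in `⟪u, z⟫`, so by the
Neyman–Pearson lemma the indicator of `A` has the smallest `N(y, I)`-mean among all tests
`0 ≤ φ ≤ 1` whose `N(x, I)`-mean is at least `Φ(a)`. Taking `φ = h` gives `Φ(a - δ) ≤ ĥ(y)`,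
that is `Φ⁻¹(ĥ(x)) - δ ≤ Φ⁻¹(ĥ(y))`. -/

open ProbabilityTheory
open scoped RealInnerProductSpace

lemma stdnpdf_eq_gaussianPDFReal : stdnpdf = gaussianPDFReal 0 1 := by
  ext t; simp [stdnpdf, gaussianPDFReal]

lemma stdncdf_eq_cdf : stdncdf = cdf (gaussianReal 0 1) := by
  ext t
  rw [cdf_eq_real, measureReal_def, gaussianReal_apply_eq_integral _ one_ne_zero,
    ENNReal.toReal_ofReal (setIntegral_nonneg measurableSet_Iic fun _ _ =>
      gaussianPDFReal_nonneg _ _ _), stdncdf, stdnpdf_eq_gaussianPDFReal]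

lemma continuous_stdncdf : Continuous stdncdf := by
  refine continuous_iff_continuousAt.2 fun t => ?_
  have : IntegrableOn stdnpdf (Set.Iic (t + 1)) := by
    rw [stdnpdf_eq_gaussianPDFReal]; exact (integrable_gaussianPDFReal 0 1).integrableOn
  exact this.continuousOn_Iic_primitive_Iic.continuousAt (Iic_mem_nhds (by linarith))

lemma stdncdf_strictMono : StrictMono stdncdf := by
  intro a b hab
  have hpos : gaussianReal 0 1 (Set.Ioc a b) ≠ 0 := fun h0 =>
    (by simpa using gaussianReal_absolutelyContinuous' 0 one_ne_zero h0 : b ≤ a).not_gt hab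
  rw [← measure_cdf (gaussianReal 0 1), StieltjesFunction.measure_Ioc,
    ENNReal.ofReal_ne_zero_iff] at hpos
  rw [stdncdf_eq_cdf]
  linarith

lemma stdncdf_stdninv {p : ℝ} (hp : p ∈ Set.Ioo (0 : ℝ) 1) : stdncdf (stdninv p) = p := by
  refine Function.invFun_eq (mem_range_of_exists_le_of_exists_ge continuous_stdncdf ?_ ?_)
  · rw [stdncdf_eq_cdf]
    exact ((tendsto_cdf_atBot (μ := gaussianReal 0 1)).eventually (eventually_le_nhds hp.1)).exists
  · rw [stdncdf_eq_cdf]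
    exact ((tendsto_cdf_atTop (μ := gaussianReal 0 1)).eventually (eventually_ge_nhds hp.2)).exists

lemma stdGaussian_map_inner {E : Type*} [NormedAddCommGroup E] [InnerProductSpace ℝ E]
    [FiniteDimensional ℝ E] [MeasurableSpace E] [BorelSpace E] {u : E} (hu : ‖u‖ = 1) :
    (stdGaussian E).map (fun z => ⟪u, z⟫) = gaussianReal 0 1 := by
  have := IsGaussian.map_eq_gaussianReal (μ := stdGaussian E) (innerSL ℝ u)
  rw [integral_strongDual_stdGaussian, variance_dual_stdGaussian, innerSL_apply_norm, hu] at this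
  simpa using this

/-- The Neyman–Pearson lemma: if `q ≤ t p` on `A` and `q ≥ t p` off `A`, then `A` has the least
`q`-mass among all tests `φ` with `p`-mass at least that of `A`, because
`(φ - 𝟙_A) (q - t p) ≥ 0` pointwise. -/
lemma setIntegral_le_integral_mul_of_likelihood_threshold {α : Type*} [MeasurableSpace α]
    {μ : Measure α} {p q φ : α → ℝ} {A : Set α} {t : ℝ} (hA : MeasurableSet A)
    (hp : Integrable p μ) (hq : Integrable q μ) (hφm : AEStronglyMeasurable φ μ)
    (hφ : ∀ z, φ z ∈ Set.Icc (0 : ℝ) 1) (ht : 0 ≤ t)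
    (hq_le : ∀ z ∈ A, q z ≤ t * p z) (hq_ge : ∀ z ∉ A, t * p z ≤ q z)
    (hpA : ∫ z in A, p z ∂μ ≤ ∫ z, φ z * p z ∂μ) :
    ∫ z in A, q z ∂μ ≤ ∫ z, φ z * q z ∂μ := by
  have hφb : ∀ᵐ z ∂μ, ‖φ z‖ ≤ 1 := ae_of_all _ fun z => by
    rw [Real.norm_eq_abs, abs_le]; constructor <;> linarith [(hφ z).1, (hφ z).2]
  have hφp := hp.bdd_mul hφm hφb
  have hφq := hq.bdd_mul hφm hφb
  have key : ∀ z, t * (φ z * p z - A.indicator p z) ≤ φ z * q z - A.indicator q z := by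
    intro z
    by_cases hz : z ∈ A
    · simp only [Set.indicator_of_mem hz]
      nlinarith [mul_nonneg (sub_nonneg.2 (hφ z).2) (sub_nonneg.2 (hq_le z hz))]
    · simp only [Set.indicator_of_notMem hz, sub_zero]
      nlinarith [mul_nonneg (hφ z).1 (sub_nonneg.2 (hq_ge z hz))]
  have hint := integral_mono ((hφp.sub (hp.indicator hA)).const_mul t)
    (hφq.sub (hq.indicator hA)) key
  simp only [Pi.sub_apply] at hint
  rw [integral_const_mul, integral_sub hφp (hp.indicator hA), integral_sub hφq (hq.indicator hA),
    integral_indicator hA, integral_indicator hA] at hint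
  nlinarith

lemma continuous_gpdf (d : ℕ) : Continuous (gpdf d) := by
  unfold gpdf; fun_prop

lemma gpdf_pos (d : ℕ) (z : EuclideanSpace ℝ (Fin d)) : 0 < gpdf d z := by
  unfold gpdf; positivity

lemma integrable_gpdf (d : ℕ) : Integrable (gpdf d) := by
  refine Integrable.const_mul (Integrable.of_integral_ne_zero ?_) _
  have := GaussianFourier.integral_rexp_neg_mul_sq_norm (V := EuclideanSpace ℝ (Fin d))
    (b := 1 / 2) (by norm_num)
  simp only [neg_div, neg_mul, one_div, ← div_eq_inv_mul] at this ⊢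
  rw [this]
  positivity

lemma withDensity_gpdf (d : ℕ) :
    volume.withDensity (fun z => ENNReal.ofReal (gpdf d z)) =
      stdGaussian (EuclideanSpace ℝ (Fin d)) := by
  have : IsFiniteMeasure (volume.withDensity (fun z => ENNReal.ofReal (gpdf d z))) :=
    isFiniteMeasure_withDensity_ofReal (integrable_gpdf d).hasFiniteIntegral
  refine Measure.ext_of_charFun (funext fun t => ?_)
  rw [charFun_stdGaussian, charFun_apply, integral_withDensity_eq_integral_toReal_smul
    (continuous_gpdf d).measurable.ennreal_ofReal (ae_of_all _ fun _ => ENNReal.ofReal_lt_top)]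
  have hπ : (0 : ℝ) < 2 * Real.pi := by positivity
  calc ∫ x, (ENNReal.ofReal (gpdf d x)).toReal • Complex.exp (⟪x, t⟫ * Complex.I)
      = ((2 * Real.pi) ^ (-(d : ℝ) / 2) : ℝ) *
          ∫ x : EuclideanSpace ℝ (Fin d),
            Complex.exp (-(1 / 2) * ‖x‖ ^ 2 + Complex.I * ⟪t, x⟫) := by
        rw [← integral_const_mul]
        congr 1 with x
        rw [ENNReal.toReal_ofReal (gpdf_pos d x).le]
        simp only [gpdf, Complex.real_smul, Complex.ofReal_mul, Complex.ofReal_exp, mul_assoc,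
          ← Complex.exp_add, real_inner_comm x t]
        push_cast
        ring_nf
    _ = Complex.exp (-‖t‖ ^ 2 / 2) := by
        rw [GaussianFourier.integral_cexp_neg_mul_sq_norm_add_of_euclideanSpace (by norm_num),
          Complex.ofReal_cpow hπ.le, Fintype.card_fin, ← mul_assoc]
        push_cast
        rw [show (Real.pi : ℂ) / (1 / 2) = 2 * Real.pi by ring, neg_div, Complex.cpow_neg,
          inv_mul_cancel₀ (by simp [Real.pi_ne_zero]), one_mul, Complex.I_sq]
        ring_nf

lemma gpdf_sub_smul (d : ℕ) {u : EuclideanSpace ℝ (Fin d)} (hu : ‖u‖ = 1)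
    (w : EuclideanSpace ℝ (Fin d)) (δ : ℝ) :
    gpdf d (w - δ • u) = gpdf d w * Real.exp (δ * ⟪u, w⟫ - δ ^ 2 / 2) := by
  rw [gpdf, gpdf, mul_assoc, ← Real.exp_add, norm_sub_sq_real, real_inner_smul_right,
    norm_smul, hu, real_inner_comm]
  congr 2
  simp only [Real.norm_eq_abs, mul_one, sq_abs]
  ring

lemma setIntegral_gpdf_inner_le (d : ℕ) {u : EuclideanSpace ℝ (Fin d)} (hu : ‖u‖ = 1) (r : ℝ) :
    ∫ z in {z | ⟪u, z⟫ ≤ r}, gpdf d z = stdncdf r := by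
  have hS : MeasurableSet {z : EuclideanSpace ℝ (Fin d) | ⟪u, z⟫ ≤ r} :=
    measurableSet_le (by fun_prop) measurable_const
  rw [← ENNReal.toReal_ofReal (setIntegral_nonneg hS fun z _ => (gpdf_pos d z).le),
    ofReal_integral_eq_lintegral_ofReal (integrable_gpdf d).integrableOn
      (ae_of_all _ fun z => (gpdf_pos d z).le), ← withDensity_apply _ hS, withDensity_gpdf,
    stdncdf_eq_cdf, cdf_eq_real, ← stdGaussian_map_inner hu,
    map_measureReal_apply (by fun_prop) measurableSet_Iic]
  rfl

lemma setIntegral_gpdf_sub_inner_le (d : ℕ) {u : EuclideanSpace ℝ (Fin d)} (hu : ‖u‖ = 1)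
    (c : EuclideanSpace ℝ (Fin d)) (r : ℝ) :
    ∫ z in {z | ⟪u, z - c⟫ ≤ r}, gpdf d (z - c) = stdncdf r := by
  rw [← setIntegral_gpdf_inner_le d hu r]
  exact (measurePreserving_sub_right volume c).setIntegral_preimage_emb
    (measurableEmbedding_subRight c) (gpdf d) {z | ⟪u, z⟫ ≤ r}

lemma gsmooth_eq_integral_mul_gpdf_sub (d : ℕ) (h : EuclideanSpace ℝ (Fin d) → ℝ)
    (x : EuclideanSpace ℝ (Fin d)) : gsmooth d h x = ∫ z, h z * gpdf d (z - x) := by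
  simpa [gsmooth] using integral_add_left_eq_self (μ := volume) (fun z => h z * gpdf d (z - x)) x

lemma stdncdf_sub_dist_le_gsmooth (d : ℕ) {h : EuclideanSpace ℝ (Fin d) → ℝ}
    (hmeas : Measurable h) (hrange : ∀ x, h x ∈ Set.Icc (0 : ℝ) 1)
    {x y : EuclideanSpace ℝ (Fin d)} {a : ℝ} (ha : stdncdf a = gsmooth d h x) :
    stdncdf (a - dist x y) ≤ gsmooth d h y := by
  rcases eq_or_ne x y with rfl | hxy
  · simp [ha]
  set δ := dist x y
  have hδ : 0 < δ := dist_pos.2 hxy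
  set u := δ⁻¹ • (y - x)
  have hu : ‖u‖ = 1 := by
    rw [norm_smul, norm_inv, Real.norm_eq_abs, abs_of_pos hδ, ← dist_eq_norm, dist_comm]
    exact inv_mul_cancel₀ hδ.ne'
  have hy : ∀ z, z - y = (z - x) - δ • u := fun z => by
    rw [smul_inv_smul₀ hδ.ne']; abel
  have hA : {z | ⟪u, z - x⟫ ≤ a} = {z | ⟪u, z - y⟫ ≤ a - δ} := by
    ext z
    simp only [Set.mem_ofPred_eq, hy, inner_sub_right, real_inner_smul_right,
      real_inner_self_eq_norm_sq, hu]
    constructor <;> intro <;> linarith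
  have key := setIntegral_le_integral_mul_of_likelihood_threshold (μ := volume)
    (p := fun z => gpdf d (z - x)) (q := fun z => gpdf d (z - y))
    (A := {z | ⟪u, z - x⟫ ≤ a}) (t := Real.exp (δ * a - δ ^ 2 / 2))
    (measurableSet_le (by fun_prop) measurable_const) ((integrable_gpdf d).comp_sub_right x)
    ((integrable_gpdf d).comp_sub_right y) hmeas.aestronglyMeasurable hrange (Real.exp_pos _).le
    (fun z hz => by
      rw [hy, gpdf_sub_smul d hu, mul_comm (Real.exp _)]
      exact mul_le_mul_of_nonneg_left (Real.exp_le_exp.2 (by nlinarith [hz.out]))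
        (gpdf_pos d _).le)
    (fun z hz => by
      rw [hy, gpdf_sub_smul d hu, mul_comm (Real.exp _)]
      exact mul_le_mul_of_nonneg_left
        (Real.exp_le_exp.2 (by nlinarith [(not_le.1 (show ¬ ⟪u, z - x⟫ ≤ a from hz)).le]))
        (gpdf_pos d _).le)
    (by rw [setIntegral_gpdf_sub_inner_le d hu, ha, gsmooth_eq_integral_mul_gpdf_sub])
  rwa [hA, setIntegral_gpdf_sub_inner_le d hu, ← gsmooth_eq_integral_mul_gpdf_sub] at key

/-- `x ↦ Φ⁻¹(ĥ(x))` is 1-Lipschitz on the set where `ĥ ∈ (0,1)`. -/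
theorem stmt_3 (d : ℕ) (h : EuclideanSpace ℝ (Fin d) → ℝ) (hmeas : Measurable h)
    (hrange : ∀ x, h x ∈ Set.Icc (0:ℝ) 1) :
    LipschitzOnWith 1 (fun x => stdninv (gsmooth d h x))
      {x | gsmooth d h x ∈ Set.Ioo (0:ℝ) 1} := by
  refine LipschitzOnWith.of_le_add fun x hx y hy => ?_
  have := stdncdf_sub_dist_le_gsmooth d hmeas hrange (stdncdf_stdninv hx) (y := y)
  rw [← stdncdf_stdninv hy, stdncdf_strictMono.le_iff_le] at this
  linarith
end
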